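/- For every prime p, every integer α ≥ 1, and all integers n1, n2, one has Σ_{u mod p^α} R(u + n1, p^α) · R(u + n2, p^α) = p^α · R(n1 − n2, p^α), where the sum runs over all residues u modulo p^α. -/

import Mathlib

/-- `e(x/q)`-type additive character: for `x : ZMod q`, `eZMod q x = exp(2πi·x/q)`. -/
noncomputable def eZMod (q : ℕ) (x : ZMod q) : ℂ :=
  Complex.exp (2 * Real.pi * Complex.I * (x.val : ℂ) / (q : ℂ))

/-- Kloosterman sum `S(m, n; q) = Σ_{d mod q, gcd(d,q)=1} e((m·d + n·d⁻¹)/q)`. -/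
noncomputable def kloostermanS (q : ℕ) (m n : ZMod q) : ℂ :=
  ∑ d ∈ (Finset.range q).filter (fun d => Nat.gcd d q = 1),
    eZMod q (m * (d : ZMod q) + n * ((d : ZMod q)⁻¹))

/-- Gauss sum `G_χ(n) = Σ_{a mod q} χ(a) e(a·n/q)`. -/
noncomputable def gaussS (q : ℕ) (χ : DirichletCharacter ℂ q) (n : ZMod q) : ℂ :=
  ∑ a ∈ Finset.range q, χ (a : ZMod q) * eZMod q ((a : ZMod q) * n)

/-- Ramanujan sum `R(n, q) = Σ_{a mod q, gcd(a,q)=1} e(a·n/q)`. -/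
noncomputable def ramanujanS (q : ℕ) (n : ZMod q) : ℂ :=
  ∑ a ∈ (Finset.range q).filter (fun a => Nat.gcd a q = 1), eZMod q ((a : ZMod q) * n)

/-! Expand both Ramanujan sums over units `a`, `b` and sum over `u` first: by orthogonality of the
primitive additive character only the pairs `b = -a` survive, each contributing
`p ^ α · e(a (n1 - n2) / p ^ α)`. -/

open Finset

section AddChar

variable {R : Type*} [CommRing R] [Fintype R] [DecidableEq R] {ψ : AddChar R ℂ}

theorem AddChar.sum_units_mul_sum_units_shift (hψ : ψ.IsPrimitive) (m n : R) :
    ∑ x : R, (∑ a : Rˣ, ψ (a * (x + m))) * (∑ b : Rˣ, ψ (b * (x + n))) =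
      Fintype.card R * ∑ a : Rˣ, ψ (a * (m - n)) := by
  have hterm (a b : Rˣ) (x : R) : ψ (a * (x + m)) * ψ (b * (x + n)) =
      ψ (x * (a + b)) * ψ (a * m + b * n) := by
    rw [← AddChar.map_add_eq_mul, ← AddChar.map_add_eq_mul]
    ring_nf
  have hsum_x (a b : Rˣ) : ∑ x : R, ψ (a * (x + m)) * ψ (b * (x + n)) =
      if -a = b then Fintype.card R * ψ (a * (m - n)) else 0 := by
    simp_rw [hterm, ← sum_mul, AddChar.sum_mulShift _ hψ, add_eq_zero_iff_neg_eq,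
      Units.ext_iff, Units.val_neg]
    split_ifs with hab
    · rw [← hab]; ring_nf
    · rw [Nat.cast_zero, zero_mul]
  calc ∑ x : R, (∑ a : Rˣ, ψ (a * (x + m))) * (∑ b : Rˣ, ψ (b * (x + n)))
      = ∑ a : Rˣ, ∑ b : Rˣ, ∑ x : R, ψ (a * (x + m)) * ψ (b * (x + n)) := by
        simp_rw [sum_mul_sum]
        rw [sum_comm]
        exact sum_congr rfl fun _ _ => sum_comm
    _ = Fintype.card R * ∑ a : Rˣ, ψ (a * (m - n)) := by
        simp_rw [hsum_x, sum_ite_eq, mem_univ, if_true, mul_sum]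

end AddChar

namespace ZMod

variable {q : ℕ} [NeZero q]

theorem sum_range_eq_sum_univ {M : Type*} [AddCommMonoid M] (f : ZMod q → M) :
    ∑ u ∈ range q, f u = ∑ x : ZMod q, f x :=
  sum_nbij' (fun u => (u : ZMod q)) val (fun _ _ => mem_univ _)
    (fun x _ => mem_range.2 x.val_lt) (fun _ hu => val_cast_of_lt (mem_range.1 hu))
    (fun x _ => natCast_zmod_val x) (fun _ _ => rfl)

theorem sum_range_coprime_eq_sum_units {M : Type*} [AddCommMonoid M] (f : ZMod q → M) :
    ∑ a ∈ (range q).filter (fun a => Nat.gcd a q = 1), f a = ∑ u : (ZMod q)ˣ, f u := by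
  refine sum_bij' (fun a ha => unitOfCoprime a (mem_filter.1 ha).2)
    (fun u _ => (u : ZMod q).val) (fun _ _ => mem_univ _)
    (fun u _ => mem_filter.2 ⟨mem_range.2 (val_lt _), val_coe_unit_coprime u⟩)
    (fun a ha => ?_) (fun u _ => ?_) (fun _ _ => by rw [coe_unitOfCoprime])
  · rw [coe_unitOfCoprime, val_cast_of_lt (mem_range.1 (mem_filter.1 ha).1)]
  · ext; rw [coe_unitOfCoprime, natCast_zmod_val]

end ZMod

theorem eZMod_eq_stdAddChar (q : ℕ) [NeZero q] (x : ZMod q) : eZMod q x = ZMod.stdAddChar x := by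
  rw [ZMod.stdAddChar_apply, ZMod.toCircle_apply, eZMod]

theorem ramanujanS_eq_sum_units (q : ℕ) [NeZero q] (n : ZMod q) :
    ramanujanS q n = ∑ a : (ZMod q)ˣ, ZMod.stdAddChar ((a : ZMod q) * n) := by
  simp_rw [ramanujanS, eZMod_eq_stdAddChar]
  exact ZMod.sum_range_coprime_eq_sum_units (fun a => ZMod.stdAddChar ((a : ZMod q) * n))

theorem stmt13_general (p : ℕ) (hp : p.Prime) (α : ℕ) (n1 n2 : ℤ) :
    ∑ u ∈ Finset.range (p ^ α),
        ramanujanS (p ^ α) (((u : ℕ) : ZMod (p ^ α)) + (n1 : ZMod (p ^ α))) *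
          ramanujanS (p ^ α) (((u : ℕ) : ZMod (p ^ α)) + (n2 : ZMod (p ^ α))) =
      ((p : ℂ) ^ α) * ramanujanS (p ^ α) ((n1 - n2 : ℤ) : ZMod (p ^ α)) := by
  have : NeZero (p ^ α) := ⟨pow_ne_zero α hp.ne_zero⟩
  simp_rw [ZMod.sum_range_eq_sum_univ (fun x : ZMod (p ^ α) => ramanujanS (p ^ α) (x + n1) *
    ramanujanS (p ^ α) (x + n2)), ramanujanS_eq_sum_units,
    AddChar.sum_units_mul_sum_units_shift (ZMod.isPrimitive_stdAddChar _), ZMod.card,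
    Int.cast_sub, Nat.cast_pow]

/-- For a prime `p`, `α ≥ 1` and integers `n1, n2`:
`Σ_{u mod p^α} R(u + n1, p^α) R(u + n2, p^α) = p^α · R(n1 − n2, p^α)`. -/
theorem stmt13 (p : ℕ) (hp : p.Prime) (α : ℕ) (hα : 1 ≤ α) (n1 n2 : ℤ) :
    ∑ u ∈ Finset.range (p ^ α),
        ramanujanS (p ^ α) (((u : ℕ) : ZMod (p ^ α)) + (n1 : ZMod (p ^ α))) *
          ramanujanS (p ^ α) (((u : ℕ) : ZMod (p ^ α)) + (n2 : ZMod (p ^ α))) =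
      ((p : ℂ) ^ α) * ramanujanS (p ^ α) ((n1 - n2 : ℤ) : ZMod (p ^ α)) :=
  stmt13_general p hp α n1 n2
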